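/- arXiv:hep-th/9309033 — 3 statements merged into one kernel-verified Lean document; each statement's English description precedes it below -/
import Mathlib

section
/- Suppose the quantities R^{μν} (for μ, ν ranging over {1,…,n} ∪ Φ) are complex-valued functions of q ∈ U only (independent of p ∈ ℝ^n), and that equations (E2) and (E3) hold for all q ∈ U and all p ∈ ℝ^n. Then R^{αi} = 0 for every α ∈ Φ and 1 ≤ i ≤ n; R^{αβ} = 0 for all α, β ∈ Φ with β ≠ ±α; and R^{α,−α} + R^{−α,α} = 0 for every α ∈ Φ. (I.e., momentum independence of the R-matrix forces these components to vanish.) -/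
open scoped Classical

noncomputable section

/-- The `i`-th standard basis vector of `ℝ^n`. -/
def stdE {n : ℕ} (i : Fin n) : Fin n → ℝ := fun k => if k = i then 1 else 0

/-- The set of roots of `gl_n`: `Φ = {e_i − e_j : i ≠ j}`. -/
def Phi (n : ℕ) : Set (Fin n → ℝ) :=
  {x | ∃ i j : Fin n, i ≠ j ∧ x = stdE i - stdE j}

/-- Euclidean dot product on `ℝ^n`. -/
def dotR {n : ℕ} (x y : Fin n → ℝ) : ℝ := ∑ k, x k * y k

/-- Structure constants of `gl_n`: for roots `α = e_a − e_b`, `γ = e_c − e_d` with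
`α + γ ∈ Φ`, `cst α γ = δ_{bc} − δ_{da}` (the coefficient of `e_{α+γ}` in
`[e_{ab}, e_{cd}] = δ_{bc} e_{ad} − δ_{da} e_{cb}`), and `cst α γ = 0` in every
other case (in particular when a subscript fails to be a root, so that terms
containing `cst` with a non-root subscript are absent). -/
def cst {n : ℕ} (α γ : Fin n → ℝ) : ℝ :=
  if α ∈ Phi n ∧ γ ∈ Phi n ∧ α + γ ∈ Phi n then
    (∑ k, max (-(α k)) 0 * max (γ k) 0) - (∑ k, max (α k) 0 * max (-(γ k)) 0)
  else 0

/-- Sum of a quantity over all roots `α ∈ Φ` (each root `e_i − e_j`, `i ≠ j`,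
occurring exactly once). -/
def sumPhi {n : ℕ} (f : (Fin n → ℝ) → ℂ) : ℂ :=
  ∑ p ∈ (Finset.univ : Finset (Fin n)).offDiag, f (stdE p.1 - stdE p.2)

/-- `z(x) = w″(x)/(2 w(x))`. -/
def zfun (w : ℝ → ℂ) (x : ℝ) : ℂ := deriv (deriv w) x / (2 * w x)

lemma dot_root {n : ℕ} (a b c d : Fin n) :
    dotR (stdE a - stdE b) (stdE c - stdE d)
      = (if a = c then (1:ℝ) else 0) - (if a = d then 1 else 0)
        - (if b = c then 1 else 0) + (if b = d then 1 else 0) := by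
  unfold dotR stdE
  simp only [Pi.sub_apply, sub_mul, mul_sub, mul_ite, ite_mul, one_mul, mul_one,
    mul_zero, zero_mul, Finset.sum_sub_distrib, Finset.sum_ite_eq', Finset.mem_univ, if_true]
  simp only [eq_comm]
  ring

lemma dot_self {n : ℕ} {a b : Fin n} (hab : a ≠ b) :
    dotR (stdE a - stdE b) (stdE a - stdE b) = 2 := by
  rw [dot_root]; simp [hab, Ne.symm hab]; norm_num

lemma dot_zero {n : ℕ} (α : Fin n → ℝ) : dotR α (0 : Fin n → ℝ) = 0 := by
  simp [dotR]

lemma neg_mem_Phi {n : ℕ} {α : Fin n → ℝ} (h : α ∈ Phi n) : -α ∈ Phi n := by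
  obtain ⟨i, j, hij, rfl⟩ := h
  exact ⟨j, i, hij.symm, by rw [neg_sub]⟩

lemma dot_comm {n : ℕ} (x y : Fin n → ℝ) : dotR x y = dotR y x := by
  unfold dotR; exact Finset.sum_congr rfl fun k _ => mul_comm _ _

lemma dot_neg_left {n : ℕ} (x y : Fin n → ℝ) : dotR (-x) y = -dotR x y := by
  unfold dotR; rw [← Finset.sum_neg_distrib]
  exact Finset.sum_congr rfl fun k _ => by simp [neg_mul]

/-- If two distinct, non-opposite roots: pairing is neither 2 nor -2. -/
lemma dot_ne_pm_two {n : ℕ} {a b c d : Fin n} (hab : a ≠ b) (hcd : c ≠ d)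
    (hne : stdE c - stdE d ≠ stdE a - stdE b)
    (hne' : stdE c - stdE d ≠ -(stdE a - stdE b)) :
    dotR (stdE a - stdE b) (stdE c - stdE d) ≠ 2 ∧
    dotR (stdE a - stdE b) (stdE c - stdE d) ≠ -2 := by
  rw [dot_root]
  rw [neg_sub] at hne'
  by_cases h1 : a = c <;> by_cases h2 : a = d <;> by_cases h3 : b = c <;> by_cases h4 : b = d <;>
    first
      | (subst_vars; simp_all; done)
      | (subst_vars; simp_all; norm_num; done)
      | (simp_all; done)
      | (simp_all; norm_num)

/-- Momentum independence of the R-matrix forces the components `R^{αi}`,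
`R^{αβ}` (`β ≠ ±α`) to vanish and `R^{α,−α} + R^{−α,α} = 0`. -/
theorem statement0
    (n : ℕ)
    (D : Set ℝ) (hDopen : IsOpen D) (hD0 : (0:ℝ) ∉ D) (hDsymm : ∀ x ∈ D, -x ∈ D)
    (w : ℝ → ℂ) (hw : ContDiffOn ℝ 2 w D) (hwne : ∀ x ∈ D, w x ≠ 0)
    (hwodd : ∀ x ∈ D, w (-x) = -w x)
    (U : Set (Fin n → ℝ)) (hUne : U.Nonempty) (hUconv : Convex ℝ U)
    (hUopen : IsOpen U) (hUD : ∀ q ∈ U, ∀ α ∈ Phi n, dotR α q ∈ D)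
    (Rhh : Fin n → Fin n → (Fin n → ℝ) → ℂ)
    (RhR : Fin n → (Fin n → ℝ) → (Fin n → ℝ) → ℂ)
    (RRh : (Fin n → ℝ) → Fin n → (Fin n → ℝ) → ℂ)
    (RRR : (Fin n → ℝ) → (Fin n → ℝ) → (Fin n → ℝ) → ℂ)
    (hE2 : ∀ q ∈ U, ∀ p : Fin n → ℝ, ∀ i : Fin n, ∀ α ∈ Phi n,
      -(α i : ℂ) * deriv w (dotR α q) =
        Complex.I * (dotR α p : ℂ) * RRh α i q
          + (∑ j, (α j : ℂ) * Rhh j i q) * w (dotR α q)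
          + sumPhi (fun β => (β i : ℂ) * w (dotR β q) * RRR (-β) α q
              + (cst β (α - β) : ℂ) * w (dotR (α - β) q) * RRh β i q))
    (hE3 : ∀ q ∈ U, ∀ p : Fin n → ℝ, ∀ α ∈ Phi n, ∀ β ∈ Phi n,
      0 = (∑ i, (α i : ℂ) * RhR i β q) * w (dotR α q)
          - (∑ i, (β i : ℂ) * RhR i α q) * w (dotR β q)
          + Complex.I * ((dotR α p : ℂ) * RRR α β q - (dotR β p : ℂ) * RRR β α q)
          + sumPhi (fun γ => (cst γ (α - γ) : ℂ) * w (dotR (α - γ) q) * RRR γ β q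
              - (cst γ (β - γ) : ℂ) * w (dotR (β - γ) q) * RRR γ α q)) :
    (∀ q ∈ U, ∀ α ∈ Phi n, ∀ i : Fin n, RRh α i q = 0) ∧
    (∀ q ∈ U, ∀ α ∈ Phi n, ∀ β ∈ Phi n, β ≠ α → β ≠ -α → RRR α β q = 0) ∧
    (∀ q ∈ U, ∀ α ∈ Phi n, RRR α (-α) q + RRR (-α) α q = 0) := by
  -- Key momentum-variation consequence of (E3):
  have key3 : ∀ q ∈ U, ∀ α ∈ Phi n, ∀ β ∈ Phi n, ∀ p : Fin n → ℝ,
      (dotR α p : ℂ) * RRR α β q - (dotR β p : ℂ) * RRR β α q = 0 := by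
    intro q hq α hα β hβ p
    have e1 := hE3 q hq p α hα β hβ
    have e0 := hE3 q hq 0 α hα β hβ
    rw [dot_zero, dot_zero] at e0
    have h : Complex.I * ((dotR α p : ℂ) * RRR α β q - (dotR β p : ℂ) * RRR β α q) = 0 := by
      push_cast at e0 ⊢
      linear_combination e0 - e1
    rcases mul_eq_zero.mp h with h' | h'
    · exact absurd h' Complex.I_ne_zero
    · exact h'
  refine ⟨?_, ?_, ?_⟩
  · -- R^{αi} = 0 from (E2)
    intro q hq α hα i
    have e1 := hE2 q hq α i α hα
    have e0 := hE2 q hq 0 i α hα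
    rw [dot_zero] at e0
    obtain ⟨a, b, hab, rfl⟩ := hα
    rw [dot_self hab] at e1
    have h : Complex.I * (2 : ℂ) * RRh (stdE a - stdE b) i q = 0 := by
      push_cast at e1 e0 ⊢
      linear_combination e0 - e1
    rcases mul_eq_zero.mp h with h' | h'
    · exact absurd h' (by norm_num [Complex.I_ne_zero])
    · exact h'
  · -- R^{αβ} = 0 for β ≠ ±α
    intro q hq α hα β hβ hne hne'
    obtain ⟨a, b, hab, rfl⟩ := hα
    obtain ⟨c, d, hcd, rfl⟩ := hβ
    set α := stdE a - stdE b
    set β := stdE c - stdE d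
    have hα : α ∈ Phi n := ⟨a, b, hab, rfl⟩
    have hβ : β ∈ Phi n := ⟨c, d, hcd, rfl⟩
    have h1 := key3 q hq α hα β hβ α
    have h2 := key3 q hq α hα β hβ β
    rw [dot_self hab] at h1
    rw [dot_comm β α] at h1
    rw [dot_comm β β, dot_self hcd] at h2
    set c0 : ℝ := dotR α β with hc0
    obtain ⟨ht, ht'⟩ := dot_ne_pm_two hab hcd hne hne'
    rw [← hc0] at ht ht'
    -- h1 : 2 * X - c0 * Y = 0 ; h2 : c0 * X - 2 * Y = 0
    have hfin : ((4 : ℂ) - (c0 : ℂ) * c0) * RRR α β q = 0 := by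
      push_cast at h1 h2 ⊢
      linear_combination (2 : ℂ) * h1 - (c0 : ℂ) * h2
    rcases mul_eq_zero.mp hfin with h' | h'
    · exfalso
      have : ((c0 : ℂ)) * c0 = 4 := by linear_combination -h'
      have hre : c0 * c0 = 4 := by exact_mod_cast this
      have h22 : c0 * c0 = 2 * 2 := by linarith
      rcases mul_self_eq_mul_self_iff.mp h22 with h | h
      · exact ht h
      · exact ht' h
    · exact h'
  · -- R^{α,−α} + R^{−α,α} = 0
    intro q hq α hα
    obtain ⟨a, b, hab, rfl⟩ := hα
    set α := stdE a - stdE b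
    have hα : α ∈ Phi n := ⟨a, b, hab, rfl⟩
    have h1 := key3 q hq α hα (-α) (neg_mem_Phi hα) α
    rw [dot_self hab, dot_neg_left, dot_self hab] at h1
    have h : (2 : ℂ) * (RRR α (-α) q + RRR (-α) α q) = 0 := by
      push_cast at h1 ⊢
      linear_combination h1
    rcases mul_eq_zero.mp h with h' | h'
    · norm_num at h'
    · exact h'


end
end

section
/- Let n ≥ 3 and assume the hypotheses (★) and (†). Then for all roots α, β, γ ∈ Φ with γ = β − α ∈ Φ, the following identity holds on U: α·(R^{β} − R^{−β}) w_β + α·(R^{γ} − R^{−γ}) w_γ = c^{β}_{αγ} (z_γ − z_β). -/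
open scoped Classical

noncomputable section

/-!
Write `β = α + γ`. All roots have `|α|² = 2`, so `α·γ = -1`, and neither `2α + γ` nor `γ - α`
is a root. Hence the instances of (†) at `(α, β)` and at `(α, γ)` each keep a single term, with
the same structure constant `c^β_{αγ} = c^γ_{-α,β}`. Multiplying them by `w_β` and `w_γ` and
adding, the `R^{α,-α}` terms cancel and `-c^β_{αγ} (w_γ w'_β + w_β w'_γ) / w_α` is left; the
addition formula at `(γ·q, -β·q)`, with `w'` and `z` even because `w` is odd, turns this into
`c^β_{αγ} (z_γ - z_β)`.
-/

section Roots

variable {n : ℕ}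

lemma stdE_eq_single (i : Fin n) : stdE i = Pi.single i 1 := by
  ext k
  simp [stdE, Pi.single_apply]

lemma dotR_add_left (x y z : Fin n → ℝ) : dotR (x + y) z = dotR x z + dotR y z :=
  add_dotProduct x y z

lemma stdE_dotProduct (i j : Fin n) : stdE i ⬝ᵥ stdE j = if i = j then 1 else 0 := by
  rw [stdE_eq_single, stdE_eq_single, single_dotProduct, Pi.single_apply, one_mul]

lemma stdE_sub_dotProduct (a b c d : Fin n) :
    (stdE a - stdE b) ⬝ᵥ (stdE c - stdE d) =
      (if a = c then 1 else 0) - (if a = d then 1 else 0)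
        - (if b = c then 1 else 0) + (if b = d then 1 else 0) := by
  simp only [sub_dotProduct, dotProduct_sub, stdE_dotProduct]
  ring

lemma mem_Phi {a b : Fin n} (hab : a ≠ b) : stdE a - stdE b ∈ Phi n := ⟨a, b, hab, rfl⟩

namespace Phi

variable {α γ : Fin n → ℝ}

lemma dotProduct_self (hα : α ∈ Phi n) : α ⬝ᵥ α = 2 := by
  obtain ⟨a, b, hab, rfl⟩ := hα
  rw [stdE_sub_dotProduct]
  norm_num [hab, hab.symm]

lemma dotProduct_eq_neg_one_of_add_mem (hα : α ∈ Phi n) (hγ : γ ∈ Phi n)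
    (hαγ : α + γ ∈ Phi n) : α ⬝ᵥ γ = -1 := by
  have h := dotProduct_self hαγ
  rw [add_dotProduct, dotProduct_add, dotProduct_add, dotProduct_comm γ α,
    dotProduct_self hα, dotProduct_self hγ] at h
  linarith

lemma stdE_sub_add_mem_cases {a b c d : Fin n} (hab : a ≠ b) (hcd : c ≠ d)
    (h : (stdE a - stdE b) + (stdE c - stdE d) ∈ Phi n) :
    (b = c ∧ a ≠ d) ∨ (a = d ∧ b ≠ c) := by
  have hdot := dotProduct_eq_neg_one_of_add_mem (mem_Phi hab) (mem_Phi hcd) h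
  rw [stdE_sub_dotProduct] at hdot
  split_ifs at hdot <;> subst_vars <;> first | (norm_num at hdot; done) | tauto

lemma ne_zero (hα : α ∈ Phi n) : α ≠ 0 := by
  rintro rfl
  simpa using dotProduct_self hα

lemma ne_add (hγ : γ ∈ Phi n) : α ≠ α + γ :=
  left_ne_add.2 (ne_zero hγ)

lemma ne_neg_add (hα : α ∈ Phi n) (hγ : γ ∈ Phi n) (hαγ : α + γ ∈ Phi n) : α ≠ -(α + γ) := by
  intro h
  have h' := congrArg (α ⬝ᵥ ·) h
  simp only [dotProduct_neg, dotProduct_add, dotProduct_self hα,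
    dotProduct_eq_neg_one_of_add_mem hα hγ hαγ] at h'
  norm_num at h'

lemma ne_of_add_mem (hα : α ∈ Phi n) (hγ : γ ∈ Phi n) (hαγ : α + γ ∈ Phi n) : α ≠ γ := by
  intro h
  have h' := dotProduct_eq_neg_one_of_add_mem hα hγ hαγ
  rw [← h, dotProduct_self hα] at h'
  norm_num at h'

lemma ne_neg_of_add_mem (hα : α ∈ Phi n) (hγ : γ ∈ Phi n) (hαγ : α + γ ∈ Phi n) : α ≠ -γ := by
  intro h
  have h' := dotProduct_eq_neg_one_of_add_mem hα hγ hαγ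
  rw [h, neg_dotProduct, dotProduct_self hγ] at h'
  norm_num at h'

lemma add_add_notMem (hα : α ∈ Phi n) (hγ : γ ∈ Phi n) (hαγ : α + γ ∈ Phi n) :
    α + γ + α ∉ Phi n := by
  intro h
  have h' := dotProduct_self h
  simp only [add_dotProduct, dotProduct_add, dotProduct_comm γ α, dotProduct_self hα,
    dotProduct_self hγ, dotProduct_eq_neg_one_of_add_mem hα hγ hαγ] at h'
  norm_num at h'

lemma sub_notMem (hα : α ∈ Phi n) (hγ : γ ∈ Phi n) (hαγ : α + γ ∈ Phi n) : γ - α ∉ Phi n := by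
  intro h
  have h' := dotProduct_self h
  simp only [sub_dotProduct, dotProduct_sub, dotProduct_comm γ α, dotProduct_self hα,
    dotProduct_self hγ, dotProduct_eq_neg_one_of_add_mem hα hγ hαγ] at h'
  norm_num at h'

end Phi

lemma max_stdE_sub_apply_zero {a b : Fin n} (hab : a ≠ b) (k : Fin n) :
    max ((stdE a - stdE b) k) 0 = stdE a k := by
  simp only [Pi.sub_apply, stdE]
  split_ifs <;> simp_all

lemma max_neg_stdE_sub_apply_zero {a b : Fin n} (hab : a ≠ b) (k : Fin n) :
    max (-((stdE a - stdE b) k)) 0 = stdE b k := by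
  rw [← Pi.neg_apply, neg_sub, max_stdE_sub_apply_zero hab.symm]

lemma cst_stdE_sub {a b c d : Fin n} (hab : a ≠ b) (hcd : c ≠ d)
    (h : (stdE a - stdE b) + (stdE c - stdE d) ∈ Phi n) :
    cst (stdE a - stdE b) (stdE c - stdE d) =
      (if b = c then 1 else 0) - (if a = d then 1 else 0) := by
  rw [cst, if_pos ⟨mem_Phi hab, mem_Phi hcd, h⟩]
  simp only [max_neg_stdE_sub_apply_zero hab, max_stdE_sub_apply_zero hcd,
    max_stdE_sub_apply_zero hab, max_neg_stdE_sub_apply_zero hcd]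
  exact congrArg₂ (· - ·) (stdE_dotProduct b c) (stdE_dotProduct a d)

lemma cst_eq_zero_of_notMem {α γ : Fin n → ℝ} (h : γ ∉ Phi n) : cst α γ = 0 :=
  if_neg fun h' => h h'.2.1

lemma cst_neg_add {α γ : Fin n → ℝ} (hα : α ∈ Phi n) (hγ : γ ∈ Phi n)
    (hαγ : α + γ ∈ Phi n) : cst (-α) (α + γ) = cst α γ := by
  obtain ⟨a, b, hab, rfl⟩ := hα
  obtain ⟨c, d, hcd, rfl⟩ := hγ
  rcases Phi.stdE_sub_add_mem_cases hab hcd hαγ with ⟨rfl, had⟩ | ⟨rfl, hbc⟩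
  · have hsum : stdE a - stdE b + (stdE b - stdE d) = stdE a - stdE d := by abel
    rw [neg_sub, hsum, cst_stdE_sub hab.symm had (by rw [sub_add_sub_cancel]; exact mem_Phi hcd),
      cst_stdE_sub hab hcd hαγ]
    simp [hcd, had]
  · have hsum : stdE a - stdE b + (stdE c - stdE a) = stdE c - stdE b := by abel
    rw [neg_sub, hsum, cst_stdE_sub hab.symm hbc.symm
      (by rw [add_comm, sub_add_sub_cancel]; exact mem_Phi hcd), cst_stdE_sub hab hcd hαγ]
    simp [hcd.symm, hbc]

end Roots

section OddFunction

variable {D : Set ℝ} {w : ℝ → ℂ}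

lemma deriv_neg_of_odd (hD : IsOpen D) (hwodd : ∀ x ∈ D, w (-x) = -w x) {y : ℝ} (hy : y ∈ D) :
    deriv w (-y) = deriv w y := by
  have h : (fun s => w (-s)) =ᶠ[nhds y] (fun s => -w s) := by
    filter_upwards [hD.mem_nhds hy] with s hs using hwodd s hs
  have h' := h.deriv_eq
  rw [deriv_comp_neg, deriv.fun_neg] at h'
  exact neg_injective h'

lemma deriv_deriv_neg_of_odd (hD : IsOpen D) (hwodd : ∀ x ∈ D, w (-x) = -w x) {y : ℝ}
    (hy : y ∈ D) : deriv (deriv w) (-y) = -deriv (deriv w) y := by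
  have h : (fun s => deriv w (-s)) =ᶠ[nhds y] deriv w := by
    filter_upwards [hD.mem_nhds hy] with s hs using deriv_neg_of_odd hD hwodd hs
  have h' := h.deriv_eq
  rw [deriv_comp_neg] at h'
  exact neg_eq_iff_eq_neg.mp h'

lemma zfun_neg_of_odd (hD : IsOpen D) (hwodd : ∀ x ∈ D, w (-x) = -w x) {y : ℝ} (hy : y ∈ D) :
    zfun w (-y) = zfun w y := by
  rw [zfun, zfun, deriv_deriv_neg_of_odd hD hwodd hy, hwodd y hy, mul_neg, neg_div_neg_eq]

lemma mul_deriv_add_mul_deriv_of_odd (hD : IsOpen D) (hDsymm : ∀ x ∈ D, -x ∈ D)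
    (hwodd : ∀ x ∈ D, w (-x) = -w x)
    (hadd : ∀ x ∈ D, ∀ y ∈ D, x + y ∈ D →
      w x * deriv w y - w y * deriv w x = (zfun w x - zfun w y) * w (x + y))
    {x y : ℝ} (hx : x ∈ D) (hy : y ∈ D) (hxy : x - y ∈ D) :
    w x * deriv w y + w y * deriv w x = (zfun w x - zfun w y) * w (x - y) := by
  have h := hadd x hx (-y) (hDsymm y hy) hxy
  rw [deriv_neg_of_odd hD hwodd hy, hwodd y hy, zfun_neg_of_odd hD hwodd hy,
    ← sub_eq_add_neg] at h
  linear_combination h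

lemma add_mul_eq_mul_zfun_sub (hD : IsOpen D) (hDsymm : ∀ x ∈ D, -x ∈ D)
    (hwne : ∀ x ∈ D, w x ≠ 0) (hwodd : ∀ x ∈ D, w (-x) = -w x)
    (hadd : ∀ x ∈ D, ∀ y ∈ D, x + y ∈ D →
      w x * deriv w y - w y * deriv w x = (zfun w x - zfun w y) * w (x + y))
    {x t : ℝ} (hx : x ∈ D) (ht : t ∈ D) (hxt : x + t ∈ D) {c R Sβ Sγ : ℂ}
    (hβ : Sβ * w x = c * (-deriv w x / w x - deriv w (x + t) / w (x + t) + 2 * R) * w t)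
    (hγ : Sγ * w x = -(c * (-deriv w x / w x + deriv w t / w t + 2 * R) * w (x + t))) :
    Sβ * w (x + t) + Sγ * w t = c * (zfun w t - zfun w (x + t)) := by
  have hwx := hwne x hx
  have hwt := hwne t ht
  have hwxt := hwne _ hxt
  have h := mul_deriv_add_mul_deriv_of_odd hD hDsymm hwodd hadd ht hxt
    (by rw [sub_add_cancel_right]; exact hDsymm x hx)
  rw [sub_add_cancel_right, hwodd x hx] at h
  field_simp at hβ hγ
  apply mul_right_cancel₀ (pow_ne_zero 2 hwx)
  linear_combination hβ + hγ - c * w x * h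

end OddFunction

theorem statement4_general
    (n : ℕ)
    (D : Set ℝ) (hDopen : IsOpen D) (hDsymm : ∀ x ∈ D, -x ∈ D)
    (w : ℝ → ℂ) (hwne : ∀ x ∈ D, w x ≠ 0)
    (hwodd : ∀ x ∈ D, w (-x) = -w x)
    (U : Set (Fin n → ℝ)) (hUD : ∀ q ∈ U, ∀ α ∈ Phi n, dotR α q ∈ D)
    (hadd : ∀ x ∈ D, ∀ y ∈ D, x + y ∈ D →
      w x * deriv w y - w y * deriv w x = (zfun w x - zfun w y) * w (x + y))
    (RhR : Fin n → (Fin n → ℝ) → (Fin n → ℝ) → ℂ)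
    (Ropp : (Fin n → ℝ) → (Fin n → ℝ) → ℂ)
    (hdagger : ∀ q ∈ U, ∀ α ∈ Phi n, ∀ β ∈ Phi n, α ≠ β → α ≠ -β →
      (∑ i, (α i : ℂ) * (RhR i β q - RhR i (-β) q)) * w (dotR α q) =
        (cst α (β - α) : ℂ) *
            (-(deriv w (dotR α q)) / w (dotR α q)
              - deriv w (dotR β q) / w (dotR β q) + 2 * Ropp α q) * w (dotR (β - α) q)
          - (cst (-α) (β + α) : ℂ) *
              (-(deriv w (dotR α q)) / w (dotR α q)
                + deriv w (dotR β q) / w (dotR β q) + 2 * Ropp α q) * w (dotR (β + α) q))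
 :
    ∀ α ∈ Phi n, ∀ β ∈ Phi n, ∀ γ ∈ Phi n, γ = β - α → ∀ q ∈ U,
      (∑ i, (α i : ℂ) * (RhR i β q - RhR i (-β) q)) * w (dotR β q)
          + (∑ i, (α i : ℂ) * (RhR i γ q - RhR i (-γ) q)) * w (dotR γ q) =
        (cst α γ : ℂ) * (zfun w (dotR γ q) - zfun w (dotR β q)) := by
  intro α hα β hβ γ hγ hγβ q hq
  obtain rfl : β = α + γ := by rw [hγβ, add_sub_cancel]
  have hβdag := hdagger q hq α hα _ hβ (Phi.ne_add hγ) (Phi.ne_neg_add hα hγ hβ)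
  rw [add_sub_cancel_left, cst_eq_zero_of_notMem (Phi.add_add_notMem hα hγ hβ)] at hβdag
  have hγdag := hdagger q hq α hα γ hγ (Phi.ne_of_add_mem hα hγ hβ)
    (Phi.ne_neg_of_add_mem hα hγ hβ)
  rw [cst_eq_zero_of_notMem (Phi.sub_notMem hα hγ hβ), add_comm γ α,
    cst_neg_add hα hγ hβ] at hγdag
  simp only [Complex.ofReal_zero, zero_mul, sub_zero, zero_sub] at hβdag hγdag
  rw [dotR_add_left] at hβdag hγdag ⊢
  exact add_mul_eq_mul_zfun_sub hDopen hDsymm hwne hwodd hadd (hUD q hq α hα) (hUD q hq γ hγ)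
    (dotR_add_left α γ q ▸ hUD q hq _ hβ) hβdag hγdag

theorem statement4
    (n : ℕ) (hn : 3 ≤ n)
    (D : Set ℝ) (hDopen : IsOpen D) (hD0 : (0:ℝ) ∉ D) (hDsymm : ∀ x ∈ D, -x ∈ D)
    (w : ℝ → ℂ) (hw : ContDiffOn ℝ 2 w D) (hwne : ∀ x ∈ D, w x ≠ 0)
    (hwodd : ∀ x ∈ D, w (-x) = -w x)
    (U : Set (Fin n → ℝ)) (hUne : U.Nonempty) (hUconv : Convex ℝ U)
    (hUopen : IsOpen U) (hUD : ∀ q ∈ U, ∀ α ∈ Phi n, dotR α q ∈ D)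
    (hadd : ∀ x ∈ D, ∀ y ∈ D, x + y ∈ D →
      w x * deriv w y - w y * deriv w x = (zfun w x - zfun w y) * w (x + y))
    (RhR : Fin n → (Fin n → ℝ) → (Fin n → ℝ) → ℂ)
    (Rsame Ropp : (Fin n → ℝ) → (Fin n → ℝ) → ℂ)
    (hstar1 : ∀ q ∈ U, ∀ α ∈ Phi n, Ropp α q + Ropp (-α) q = 0)
    (hstar2 : ∀ q ∈ U, ∀ α ∈ Phi n, Rsame α q + Rsame (-α) q = 0)
    (hstar3 : ∀ q ∈ U, ∀ α ∈ Phi n,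
      Rsame α q + Ropp (-α) q = -(deriv w (dotR α q)) / w (dotR α q))
    (hdagger : ∀ q ∈ U, ∀ α ∈ Phi n, ∀ β ∈ Phi n, α ≠ β → α ≠ -β →
      (∑ i, (α i : ℂ) * (RhR i β q - RhR i (-β) q)) * w (dotR α q) =
        (cst α (β - α) : ℂ) *
            (-(deriv w (dotR α q)) / w (dotR α q)
              - deriv w (dotR β q) / w (dotR β q) + 2 * Ropp α q) * w (dotR (β - α) q)
          - (cst (-α) (β + α) : ℂ) *
              (-(deriv w (dotR α q)) / w (dotR α q)
                + deriv w (dotR β q) / w (dotR β q) + 2 * Ropp α q) * w (dotR (β + α) q))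
 :
    ∀ α ∈ Phi n, ∀ β ∈ Phi n, ∀ γ ∈ Phi n, γ = β - α → ∀ q ∈ U,
      (∑ i, (α i : ℂ) * (RhR i β q - RhR i (-β) q)) * w (dotR β q)
          + (∑ i, (α i : ℂ) * (RhR i γ q - RhR i (-γ) q)) * w (dotR γ q) =
        (cst α γ : ℂ) * (zfun w (dotR γ q) - zfun w (dotR β q)) :=
  statement4_general n D hDopen hDsymm w hwne hwodd U hUD hadd RhR Ropp hdagger

end
end

section
/- Let u ∈ ℂ ∖ Λ. The function x ↦ w(x;u) is odd — i.e., w(−x;u) = −w(x;u) for all x ∈ ℂ with x ∉ Λ — if and only if 2u ∈ Λ (u is a half-period of the lattice). -/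
open scoped Classical

noncomputable section

/-- The rank-2 lattice `Λ = ℤω₁ + ℤω₂ ⊂ ℂ`. -/
def LatticeOf (ω₁ ω₂ : ℂ) : Set ℂ :=
  {z | ∃ m l : ℤ, z = (m : ℂ) * ω₁ + (l : ℂ) * ω₂}

/-- Krichever's function `w(x;u) = σ(u−x) e^{ζ(u)x} / (σ(u)σ(x))`. -/
def wK (sig zet : ℂ → ℂ) (x u : ℂ) : ℂ :=
  sig (u - x) * Complex.exp (zet u * x) / (sig u * sig x)

/-!
If `w(·;u)` is odd, then `w(-u;u) = -w(u;u) = 0`, which forces `σ(2u) = 0`, i.e. `2u ∈ Λ`.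

Conversely, `℘(z) - ℘(-z)` is a `Λ`-periodic function whose pole at `0` cancels, so it is
entire and bounded, hence zero by Liouville. Integrating `ζ' = -℘` and `σ'/σ = ζ` on the connected
set `ℂ \ Λ` and comparing with the behaviour at `0` shows that `ζ` and `σ` are odd. For `2u ∈ Λ`,
the same argument makes `ζ(z + 2u) - ζ(z)` constant, equal to `2ζ(u)` (take `z = -u`), and then
`σ(z + 2u) = -e^{2ζ(u)(z + u)} σ(z)`. With `z = x - u` and oddness of `σ` this reads
`σ(u + x) = e^{2ζ(u)x} σ(u - x)`, which is exactly `w(-x;u) = -w(x;u)`.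
-/

open Filter Topology

lemma tendsto_neg_nhdsNE_zero {G : Type*} [AddGroup G] [TopologicalSpace G] [ContinuousNeg G] :
    Tendsto (fun z : G => -z) (𝓝[≠] 0) (𝓝[≠] 0) :=
  (continuous_neg.tendsto' 0 0 neg_zero).inf
    (tendsto_principal_principal.2 fun _ hz => neg_ne_zero.2 hz)

lemma Function.Periodic.of_mem_lattice {L : PeriodPair} {α : Type*} {f : ℂ → α}
    (h₁ : f.Periodic L.ω₁) (h₂ : f.Periodic L.ω₂) {l : ℂ} (hl : l ∈ L.lattice) :
    f.Periodic l := by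
  induction hl using Submodule.span_induction with
  | mem x hx => rcases hx with rfl | rfl <;> assumption
  | zero => exact Function.periodic_with_period_zero f
  | add x y _ _ hx hy => exact hx.add_period hy
  | smul n x _ hx => exact hx.zsmul n

namespace PeriodPair

lemma latticeOf_eq_lattice (L : PeriodPair) : LatticeOf L.ω₁ L.ω₂ = L.lattice := by
  ext z
  rw [SetLike.mem_coe, mem_lattice]
  exact exists₂_congr fun _ _ => eq_comm

variable {L : PeriodPair}

lemma isOpen_compl_lattice : IsOpen (L.lattice : Set ℂ)ᶜ := by
  simpa using L.isOpen_compl_lattice_sdiff (s := ∅)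

lemma isPreconnected_compl_lattice : IsPreconnected (L.lattice : Set ℂ)ᶜ :=
  (Set.countable_coe_iff.mp (inferInstanceAs (Countable L.lattice))
    |>.isConnected_compl_of_one_lt_rank (by simp)).isPreconnected

lemma eventually_notMem_lattice_nhdsNE_zero : ∀ᶠ z in 𝓝[≠] (0 : ℂ), z ∉ L.lattice := by
  filter_upwards [nhdsWithin_le_nhds (L.compl_lattice_sdiff_singleton_mem_nhds 0),
    self_mem_nhdsWithin] with z hz hz0
  exact fun h => hz ⟨h, hz0⟩

lemma add_notMem_lattice {z l : ℂ} (hz : z ∉ L.lattice) (hl : l ∈ L.lattice) :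
    z + l ∉ L.lattice :=
  fun h => hz (by simpa using sub_mem h hl)

lemma neg_notMem_lattice {z : ℂ} (hz : z ∉ L.lattice) : -z ∉ L.lattice :=
  fun h => hz (by simpa using neg_mem h)

lemma differentiable_of_periodic_of_differentiableOn_compl {E : Type*} [NormedAddCommGroup E]
    [NormedSpace ℂ E] [CompleteSpace E] {f : ℂ → E} (hper : ∀ l ∈ L.lattice, f.Periodic l)
    (hf : DifferentiableOn ℂ f (L.lattice : Set ℂ)ᶜ) (hf₀ : ContinuousAt f 0) :
    Differentiable ℂ f := by
  have hnhds := L.compl_lattice_sdiff_singleton_mem_nhds 0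
  have hf₀' : DifferentiableAt ℂ f 0 := by
    exact ((Complex.differentiableOn_compl_singleton_and_continuousAt_iff hnhds).mp
      ⟨hf.mono fun z hz hzL => hz.1 ⟨hzL, hz.2⟩, hf₀⟩).differentiableAt hnhds
  intro z
  by_cases hz : z ∈ L.lattice
  · have hshift : f = fun y => f (y - z) := funext fun y => by
      simpa using hper z hz (y - z)
    have hf₀z : DifferentiableAt ℂ f ((fun y => y - z) z) := by simpa using hf₀'
    rw [hshift]
    exact hf₀z.comp (f := fun y => y - z) z (differentiableAt_id.sub_const z)
  · exact hf.differentiableAt (L.isOpen_compl_lattice.mem_nhds hz)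

lemma eq_of_periodic_of_differentiableOn_compl {E : Type*} [NormedAddCommGroup E]
    [NormedSpace ℂ E] [CompleteSpace E] {f : ℂ → E} (hper : ∀ l ∈ L.lattice, f.Periodic l)
    (hf : DifferentiableOn ℂ f (L.lattice : Set ℂ)ᶜ) (hf₀ : ContinuousAt f 0) (z : ℂ) :
    f z = f 0 := by
  have hdiff := differentiable_of_periodic_of_differentiableOn_compl hper hf hf₀
  refine hdiff.apply_eq_apply_of_bounded ?_ z 0
  exact (IsZLattice.isCompact_range_of_periodic L.lattice f hdiff.continuous
    fun z w hw => hper w hw z).isBounded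

lemma eq_of_hasDerivAt_zero {f : ℂ → ℂ} (hf : ∀ z ∉ L.lattice, HasDerivAt f 0 z) {z w : ℂ}
    (hz : z ∉ L.lattice) (hw : w ∉ L.lattice) : f z = f w :=
  L.isOpen_compl_lattice.is_const_of_deriv_eq_zero L.isPreconnected_compl_lattice
    (fun y hy => (hf y hy).differentiableAt.differentiableWithinAt)
    (fun y hy => (hf y hy).deriv) hz hw

lemma eq_of_hasDerivAt_zero_of_tendsto {f : ℂ → ℂ} {c : ℂ}
    (hf : ∀ z ∉ L.lattice, HasDerivAt f 0 z) (hlim : Tendsto f (𝓝[≠] 0) (𝓝 c)) {z : ℂ}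
    (hz : z ∉ L.lattice) : f z = c := by
  refine tendsto_nhds_unique (tendsto_const_nhds.congr' ?_) hlim
  filter_upwards [L.eventually_notMem_lattice_nhdsNE_zero] with w hw
  exact eq_of_hasDerivAt_zero hf hz hw

variable {pe zet sig : ℂ → ℂ}

lemma pe_even (hper : ∀ l ∈ L.lattice, pe.Periodic l)
    (hdiff : DifferentiableOn ℂ pe (L.lattice : Set ℂ)ᶜ)
    (hlim : Tendsto (fun z => pe z - 1 / z ^ 2) (𝓝[≠] 0) (𝓝 0)) : pe.Even := by
  set f : ℂ → ℂ := fun z => pe z - pe (-z)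
  have hf_per : ∀ l ∈ L.lattice, f.Periodic l := fun l hl z => by
    simp only [f, neg_add, hper l hl z, hper (-l) (neg_mem hl) (-z)]
  have hf_diff : DifferentiableOn ℂ f (L.lattice : Set ℂ)ᶜ :=
    hdiff.sub (hdiff.comp (differentiableOn_neg _) fun _ => neg_notMem_lattice)
  have hf₀ : ContinuousAt f 0 := by
    rw [← continuousWithinAt_compl_self, ContinuousWithinAt]
    refine ((hlim.sub (hlim.comp tendsto_neg_nhdsNE_zero)).congr fun z => ?_).trans (by simp [f])
    simp only [Function.comp, f, neg_sq]
    ring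
  intro z
  simpa [f, sub_eq_zero, eq_comm] using
    eq_of_periodic_of_differentiableOn_compl hf_per hf_diff hf₀ z

lemma zet_neg (hpe : pe.Even) (hderiv : ∀ z ∉ L.lattice, HasDerivAt zet (-pe z) z)
    (hlim : Tendsto (fun z => zet z - 1 / z) (𝓝[≠] 0) (𝓝 0)) {z : ℂ} (hz : z ∉ L.lattice) :
    zet (-z) = -zet z := by
  have hderiv_sum : ∀ z ∉ L.lattice, HasDerivAt (fun y => zet y + zet (-y)) 0 z := by
    intro z hz
    refine ((hderiv z hz).add
      ((hderiv (-z) (neg_notMem_lattice hz)).comp z (hasDerivAt_neg z))).congr_deriv ?_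
    rw [hpe z]
    ring
  have hlim_sum : Tendsto (fun y => zet y + zet (-y)) (𝓝[≠] 0) (𝓝 0) := by
    refine ((hlim.add (hlim.comp tendsto_neg_nhdsNE_zero)).congr fun y => ?_).trans (by simp)
    simp only [Function.comp, div_neg]
    ring
  linear_combination eq_of_hasDerivAt_zero_of_tendsto hderiv_sum hlim_sum hz

lemma sig_odd (hzero : ∀ z, sig z = 0 ↔ z ∈ L.lattice)
    (hderiv : ∀ z ∉ L.lattice, HasDerivAt sig (zet z * sig z) z)
    (hzet : ∀ z ∉ L.lattice, zet (-z) = -zet z)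
    (hlim : Tendsto (fun z => sig z / z) (𝓝[≠] 0) (𝓝 1)) : sig.Odd := by
  have hderiv_quot : ∀ z ∉ L.lattice, HasDerivAt (fun y => sig (-y) / sig y) 0 z := by
    intro z hz
    refine (((hderiv (-z) (neg_notMem_lattice hz)).comp z (hasDerivAt_neg z)).div (hderiv z hz)
      ((hzero z).not.mpr hz)).congr_deriv ?_
    rw [hzet z hz, Function.comp_apply]
    ring
  have hlim_quot : Tendsto (fun y => sig (-y) / sig y) (𝓝[≠] 0) (𝓝 (-1)) := by
    have h := ((hlim.comp tendsto_neg_nhdsNE_zero).neg.div hlim one_ne_zero)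
    refine (h.congr' ?_).trans (by simp)
    filter_upwards [self_mem_nhdsWithin] with y hy
    have hy : y ≠ 0 := hy
    simp only [Function.comp, Pi.div_apply]
    field_simp
  intro z
  by_cases hz : z ∈ L.lattice
  · rw [(hzero z).mpr hz, (hzero (-z)).mpr (neg_mem hz), neg_zero]
  · have h := eq_of_hasDerivAt_zero_of_tendsto hderiv_quot hlim_quot hz
    rw [div_eq_iff ((hzero z).not.mpr hz)] at h
    rw [h]
    ring

lemma zet_add_sub_eq (hper : ∀ l ∈ L.lattice, pe.Periodic l)
    (hderiv : ∀ z ∉ L.lattice, HasDerivAt zet (-pe z) z) {l : ℂ} (hl : l ∈ L.lattice) {z w : ℂ}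
    (hz : z ∉ L.lattice) (hw : w ∉ L.lattice) : zet (z + l) - zet z = zet (w + l) - zet w := by
  refine eq_of_hasDerivAt_zero (f := fun y => zet (y + l) - zet y) (fun y hy => ?_) hz hw
  refine (((hderiv _ (add_notMem_lattice hy hl)).comp_add_const y l).sub
    (hderiv y hy)).congr_deriv ?_
  rw [hper l hl y, neg_sub_neg, sub_self]

lemma sig_add_mul_exp_div_eq (hzero : ∀ z, sig z = 0 ↔ z ∈ L.lattice)
    (hderiv : ∀ z ∉ L.lattice, HasDerivAt sig (zet z * sig z) z) {l η : ℂ} (hl : l ∈ L.lattice)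
    (hzet : ∀ z ∉ L.lattice, zet (z + l) = zet z + η) {z w : ℂ} (hz : z ∉ L.lattice)
    (hw : w ∉ L.lattice) :
    sig (z + l) * Complex.exp (-(η * z)) / sig z =
      sig (w + l) * Complex.exp (-(η * w)) / sig w := by
  refine eq_of_hasDerivAt_zero (f := fun y => sig (y + l) * Complex.exp (-(η * y)) / sig y)
    (fun y hy => ?_) hz hw
  have hexp : HasDerivAt (fun y => Complex.exp (-(η * y))) (Complex.exp (-(η * y)) * -η) y := by
    simpa using ((hasDerivAt_id y).const_mul η).neg.cexp
  refine ((((hderiv _ (add_notMem_lattice hy hl)).comp_add_const y l).mul hexp).div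
    (hderiv y hy) ((hzero y).not.mpr hy)).congr_deriv ?_
  simp only [Pi.mul_apply, hzet y hy]
  ring

lemma sig_add_eq_exp_mul_sig_sub (hper : ∀ l ∈ L.lattice, pe.Periodic l)
    (hzet_deriv : ∀ z ∉ L.lattice, HasDerivAt zet (-pe z) z)
    (hzet_neg : ∀ z ∉ L.lattice, zet (-z) = -zet z) (hzero : ∀ z, sig z = 0 ↔ z ∈ L.lattice)
    (hsig_deriv : ∀ z ∉ L.lattice, HasDerivAt sig (zet z * sig z) z) (hsig : sig.Odd) {u : ℂ}
    (hu : u ∉ L.lattice) (h2u : 2 * u ∈ L.lattice) (x : ℂ) :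
    sig (u + x) = Complex.exp (2 * zet u * x) * sig (u - x) := by
  have hzet_add : ∀ z ∉ L.lattice, zet (z + 2 * u) = zet z + 2 * zet u := by
    intro z hz
    have h := zet_add_sub_eq hper hzet_deriv h2u hz (neg_notMem_lattice hu)
    rw [show -u + 2 * u = u by ring, hzet_neg u hu] at h
    linear_combination h
  by_cases hxu : x - u ∈ L.lattice
  · rw [(hzero _).mpr (show u + x = x - u + 2 * u by ring ▸ add_mem hxu h2u),
      (hzero _).mpr (show u - x = -(x - u) by ring ▸ neg_mem hxu), mul_zero]
  have h := sig_add_mul_exp_div_eq hzero hsig_deriv h2u hzet_add hxu (neg_notMem_lattice hu)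
  rw [show x - u + 2 * u = u + x by ring, show -u + 2 * u = u by ring,
    show x - u = -(u - x) by ring, hsig, hsig u, div_neg, div_neg, neg_inj,
    div_eq_div_iff ((hzero _).not.mpr (neg_sub x u ▸ neg_notMem_lattice hxu))
      ((hzero u).not.mpr hu)] at h
  have hexp : Complex.exp (-(2 * zet u * -(u - x))) * Complex.exp (2 * zet u * x) =
      Complex.exp (-(2 * zet u * -u)) := by
    rw [← Complex.exp_add]
    ring_nf
  apply mul_left_cancel₀ ((hzero u).not.mpr hu)
  apply mul_left_cancel₀ (Complex.exp_ne_zero (-(2 * zet u * -(u - x))))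
  linear_combination h - sig u * sig (u - x) * hexp

lemma wK_neg_of_sig_add_eq (hsig : sig.Odd) {u : ℂ}
    (h : ∀ x, sig (u + x) = Complex.exp (2 * zet u * x) * sig (u - x)) (x : ℂ) :
    wK sig zet (-x) u = -wK sig zet x u := by
  rw [wK, wK, sub_neg_eq_add, h, hsig, show 2 * zet u * x = zet u * x + zet u * x by ring,
    Complex.exp_add, mul_neg, Complex.exp_neg]
  field_simp

lemma two_mul_mem_of_wK_neg_self (hzero : ∀ z, sig z = 0 ↔ z ∈ L.lattice) {u : ℂ}
    (hu : u ∉ L.lattice) (h : wK sig zet (-u) u = -wK sig zet u u) : 2 * u ∈ L.lattice := by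
  rw [wK, wK, sub_self, (hzero 0).mpr (zero_mem _), zero_mul, zero_div, neg_zero,
    div_eq_zero_iff, mul_eq_zero, mul_eq_zero, hzero, hzero, hzero] at h
  rcases h with (h | h) | h | h
  · rwa [sub_neg_eq_add, ← two_mul] at h
  · exact absurd h (Complex.exp_ne_zero _)
  · exact absurd h hu
  · exact absurd h (neg_notMem_lattice hu)

end PeriodPair

theorem statement12_general
    (ω₁ ω₂ : ℂ) (hω : LinearIndependent ℝ ![ω₁, ω₂])
    (sig zet pe : ℂ → ℂ)
    -- `pe = ℘` is the Weierstrass ℘-function of `Λ`: holomorphic off `Λ`,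
    -- `Λ`-periodic, with `℘(z) − 1/z² → 0` as `z → 0`.
    (hpe_diff : DifferentiableOn ℂ pe (LatticeOf ω₁ ω₂)ᶜ)
    (hpe_per₁ : ∀ z : ℂ, pe (z + ω₁) = pe z)
    (hpe_per₂ : ∀ z : ℂ, pe (z + ω₂) = pe z)
    (hpe_zero : Filter.Tendsto (fun z : ℂ => pe z - 1 / z ^ 2)
      (nhdsWithin 0 {(0:ℂ)}ᶜ) (nhds 0))
    -- `zet = ζ` is the Weierstrass zeta function: `ζ′ = −℘`, `ζ(z) − 1/z → 0`.
    (hzet_deriv : ∀ z ∉ LatticeOf ω₁ ω₂, HasDerivAt zet (-pe z) z)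
    (hzet_zero : Filter.Tendsto (fun z : ℂ => zet z - 1 / z)
      (nhdsWithin 0 {(0:ℂ)}ᶜ) (nhds 0))
    -- `sig = σ` is the Weierstrass sigma function: entire, vanishing exactly on
    -- `Λ`, with `σ′/σ = ζ` off `Λ` and `σ(z)/z → 1` as `z → 0`.
    (hsig_zero : ∀ z : ℂ, sig z = 0 ↔ z ∈ LatticeOf ω₁ ω₂)
    (hsig_deriv : ∀ z ∉ LatticeOf ω₁ ω₂, HasDerivAt sig (zet z * sig z) z)
    (hsig_one : Filter.Tendsto (fun z : ℂ => sig z / z)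
      (nhdsWithin 0 {(0:ℂ)}ᶜ) (nhds 1))
    (u : ℂ) (hu : u ∉ LatticeOf ω₁ ω₂) :
    (∀ x : ℂ, x ∉ LatticeOf ω₁ ω₂ → wK sig zet (-x) u = -wK sig zet x u) ↔
      2 * u ∈ LatticeOf ω₁ ω₂ := by
  set P : PeriodPair := ⟨ω₁, ω₂, hω⟩
  have hΛ : LatticeOf ω₁ ω₂ = P.lattice := P.latticeOf_eq_lattice
  simp only [hΛ, SetLike.mem_coe] at hpe_diff hzet_deriv hsig_zero hsig_deriv hu ⊢
  have hper : ∀ l ∈ P.lattice, pe.Periodic l := fun l hl =>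
    Function.Periodic.of_mem_lattice (L := P) hpe_per₁ hpe_per₂ hl
  have hzet : ∀ z ∉ P.lattice, zet (-z) = -zet z := fun z hz =>
    PeriodPair.zet_neg (PeriodPair.pe_even hper hpe_diff hpe_zero) hzet_deriv hzet_zero hz
  have hsig : sig.Odd := PeriodPair.sig_odd hsig_zero hsig_deriv hzet hsig_one
  refine ⟨fun hodd => PeriodPair.two_mul_mem_of_wK_neg_self hsig_zero hu (hodd u hu),
    fun h2u x _ => PeriodPair.wK_neg_of_sig_add_eq hsig ?_ x⟩
  exact PeriodPair.sig_add_eq_exp_mul_sig_sub hper hzet_deriv hzet hsig_zero hsig_deriv hsig hu h2u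

/-- `x ↦ w(x;u)` is odd iff `u` is a half-period of the lattice. -/
theorem statement12
    (ω₁ ω₂ : ℂ) (hω : LinearIndependent ℝ ![ω₁, ω₂])
    (sig zet pe : ℂ → ℂ)
    -- `pe = ℘` is the Weierstrass ℘-function of `Λ`: holomorphic off `Λ`,
    -- `Λ`-periodic, with `℘(z) − 1/z² → 0` as `z → 0`.
    (hpe_diff : DifferentiableOn ℂ pe (LatticeOf ω₁ ω₂)ᶜ)
    (hpe_per₁ : ∀ z : ℂ, pe (z + ω₁) = pe z)
    (hpe_per₂ : ∀ z : ℂ, pe (z + ω₂) = pe z)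
    (hpe_zero : Filter.Tendsto (fun z : ℂ => pe z - 1 / z ^ 2)
      (nhdsWithin 0 {(0:ℂ)}ᶜ) (nhds 0))
    -- `zet = ζ` is the Weierstrass zeta function: `ζ′ = −℘`, `ζ(z) − 1/z → 0`.
    (hzet_deriv : ∀ z ∉ LatticeOf ω₁ ω₂, HasDerivAt zet (-pe z) z)
    (hzet_zero : Filter.Tendsto (fun z : ℂ => zet z - 1 / z)
      (nhdsWithin 0 {(0:ℂ)}ᶜ) (nhds 0))
    -- `sig = σ` is the Weierstrass sigma function: entire, vanishing exactly on
    -- `Λ`, with `σ′/σ = ζ` off `Λ` and `σ(z)/z → 1` as `z → 0`.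
    (hsig_diff : Differentiable ℂ sig)
    (hsig_zero : ∀ z : ℂ, sig z = 0 ↔ z ∈ LatticeOf ω₁ ω₂)
    (hsig_deriv : ∀ z ∉ LatticeOf ω₁ ω₂, HasDerivAt sig (zet z * sig z) z)
    (hsig_one : Filter.Tendsto (fun z : ℂ => sig z / z)
      (nhdsWithin 0 {(0:ℂ)}ᶜ) (nhds 1))
    (u : ℂ) (hu : u ∉ LatticeOf ω₁ ω₂) :
    (∀ x : ℂ, x ∉ LatticeOf ω₁ ω₂ → wK sig zet (-x) u = -wK sig zet x u) ↔
      2 * u ∈ LatticeOf ω₁ ω₂ :=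
  statement12_general ω₁ ω₂ hω sig zet pe hpe_diff hpe_per₁ hpe_per₂ hpe_zero hzet_deriv hzet_zero
    hsig_zero hsig_deriv hsig_one u hu

end
end
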